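/- arXiv:2406.11349 — 3 statements merged into one kernel-verified Lean document; each statement's English description precedes it below -/
import Mathlib

section
/- Let w₀ = diag(−1,…,−1,1) ∈ M_{n+2}(ℝ) (with n+1 entries −1) and for x ∈ ℝⁿ\{0\} let n̄_x be the block matrix [[Iₙ, x, x], [−xᵀ, 1−‖x‖²/2, −‖x‖²/2], [xᵀ, ‖x‖²/2, 1+‖x‖²/2]]. Then w₀ · n̄_x = n̄_y · m̃ · a · n_y where y = −x/‖x‖², m̃ = diag(2xxᵀ/‖x‖² − Iₙ, 1, 1), a = exp(t H₀) with t = 2 log‖x‖ and H₀ = E_{n+1,n+2}+E_{n+2,n+1}, and n_y is the block matrix [[Iₙ, y, −y], [−yᵀ, 1−‖y‖²/2, ‖y‖²/2], [−yᵀ, −‖y‖²/2, 1+‖y‖²/2]]. -/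
/-!
Split off the last two coordinates, `Fin (n + 2) ≃ Fin n ⊕ Fin 2`. Every matrix in the identity
then has the shape `[[α I + β x xᵀ, x uᵀ], [v xᵀ, D]]` with `D` a `2 × 2` block, and such
matrices multiply by an explicit formula involving only `S = x ⬝ᵥ x`. Since `H₀³ = H₀`, the
exponential series collapses to `exp (t H₀) = 1 + sinh t • H₀ + (cosh t - 1) • H₀²`, and for
`t = log S` the hyperbolic functions are `(S ± S⁻¹) / 2`. Both sides of the identity therefore
reduce to the same block data, which is a rational identity in `S`.
-/

open Matrix

/-- The block matrix `n̄_x = [[Iₙ, x, x], [−xᵀ, 1−‖x‖²/2, −‖x‖²/2], [xᵀ, ‖x‖²/2, 1+‖x‖²/2]]`. -/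
noncomputable def nbarMat (n : ℕ) (x : Fin n → ℝ) : Matrix (Fin (n + 2)) (Fin (n + 2)) ℝ :=
  fun a b =>
    if ha : (a : ℕ) < n then
      if hb : (b : ℕ) < n then (if a = b then 1 else 0) else x ⟨a, ha⟩
    else if hb : (b : ℕ) < n then
      (if (a : ℕ) = n then -x ⟨b, hb⟩ else x ⟨b, hb⟩)
    else if (a : ℕ) = n then
      (if (b : ℕ) = n then 1 - (∑ i, x i ^ 2) / 2 else -(∑ i, x i ^ 2) / 2)
    else
      (if (b : ℕ) = n then (∑ i, x i ^ 2) / 2 else 1 + (∑ i, x i ^ 2) / 2)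

/-- The block matrix `n_x = [[Iₙ, x, −x], [−xᵀ, 1−‖x‖²/2, ‖x‖²/2], [−xᵀ, −‖x‖²/2, 1+‖x‖²/2]]`. -/
noncomputable def nMat (n : ℕ) (x : Fin n → ℝ) : Matrix (Fin (n + 2)) (Fin (n + 2)) ℝ :=
  fun a b =>
    if ha : (a : ℕ) < n then
      if hb : (b : ℕ) < n then (if a = b then 1 else 0)
      else (if (b : ℕ) = n then x ⟨a, ha⟩ else -x ⟨a, ha⟩)
    else if hb : (b : ℕ) < n then -x ⟨b, hb⟩
    else if (a : ℕ) = n then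
      (if (b : ℕ) = n then 1 - (∑ i, x i ^ 2) / 2 else (∑ i, x i ^ 2) / 2)
    else
      (if (b : ℕ) = n then -(∑ i, x i ^ 2) / 2 else 1 + (∑ i, x i ^ 2) / 2)

/-- `w₀ = diag(−1,…,−1,1)` with `n+1` entries `−1`. -/
noncomputable def w0Mat (n : ℕ) : Matrix (Fin (n + 2)) (Fin (n + 2)) ℝ :=
  fun a b => if a = b then (if (a : ℕ) = n + 1 then 1 else -1) else 0

/-- `m̃ = diag(2xxᵀ/‖x‖² − Iₙ, 1, 1)`. -/
noncomputable def mTildeMat (n : ℕ) (x : Fin n → ℝ) : Matrix (Fin (n + 2)) (Fin (n + 2)) ℝ :=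
  fun a b =>
    if ha : (a : ℕ) < n then
      if hb : (b : ℕ) < n then
        2 * x ⟨a, ha⟩ * x ⟨b, hb⟩ / (∑ i, x i ^ 2) - (if a = b then 1 else 0)
      else 0
    else if (b : ℕ) < n then 0 else (if a = b then 1 else 0)

/-- `H₀ = E_{n+1,n+2} + E_{n+2,n+1}` (1-based indices). -/
noncomputable def H0Mat (n : ℕ) : Matrix (Fin (n + 2)) (Fin (n + 2)) ℝ :=
  Matrix.single ⟨n, by omega⟩ ⟨n + 1, by omega⟩ 1
    + Matrix.single ⟨n + 1, by omega⟩ ⟨n, by omega⟩ 1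

open Nat in
theorem NormedSpace.exp_smul_of_pow_three_eq_self {A : Type*} [Ring A] [Algebra ℝ A]
    [TopologicalSpace A] [IsTopologicalRing A] [T2Space A] [ContinuousSMul ℝ A] {J : A}
    (hJ : J ^ 3 = J) (t : ℝ) :
    exp (t • J) = 1 + Real.sinh t • J + (Real.cosh t - 1) • J ^ 2 := by
  have h_odd : ∀ k, J ^ (2 * k + 1) = J := by
    intro k
    induction k with
    | zero => simp
    | succ k ih =>
      rw [show 2 * (k + 1) + 1 = 2 * k + 1 + 2 by ring, pow_add, ih, ← pow_succ' J 2, hJ]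
  have h_even : ∀ k, J ^ (2 * (k + 1)) = J ^ 2 := fun k => by
    rw [mul_add, mul_one, pow_succ, h_odd, sq]
  have hcosh : HasSum (fun k => (t ^ (2 * k) / (2 * k)! : ℝ) • J ^ (2 * k))
      (1 + (Real.cosh t - 1) • J ^ 2) := by
    -- the `k = 0` term of the even part is `1`, not `J ^ 2`
    have := ((Real.hasSum_cosh t).smul_const (J ^ 2)).add (hasSum_ite_eq 0 (1 - J ^ 2))
    convert this using 1
    · funext k
      rcases k with _ | k
      · simp
      · simp only [h_even, add_eq_zero, one_ne_zero, and_false, if_false, add_zero]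
    · rw [sub_smul, one_smul]; abel
  have hsinh : HasSum (fun k => (t ^ (2 * k + 1) / (2 * k + 1)! : ℝ) • J ^ (2 * k + 1))
      (Real.sinh t • J) := by
    simp_rw [h_odd]
    exact (Real.hasSum_sinh t).smul_const J
  have hexp := HasSum.even_add_odd (f := fun k => (t ^ k / k ! : ℝ) • J ^ k) hcosh hsinh
  rw [exp_eq_tsum ℝ]
  simp only [smul_pow, smul_smul, inv_mul_eq_div]
  rw [hexp.tsum_eq]
  abel

namespace Matrix

variable {m o R : Type*} [Fintype m] [DecidableEq m] [Fintype o] [CommRing R]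

def rankOneBlock (x : m → R) (α β : R) (u v : o → R) (D : Matrix o o R) :
    Matrix (m ⊕ o) (m ⊕ o) R :=
  fromBlocks (α • 1 + β • vecMulVec x x) (vecMulVec x u) (vecMulVec v x) D

theorem rankOneBlock_mul (x : m → R) (α β α' β' : R) (u v u' v' : o → R)
    (D D' : Matrix o o R) :
    rankOneBlock x α β u v D * rankOneBlock x α' β' u' v' D' =
      rankOneBlock x (α * α') (α * β' + β * α' + (x ⬝ᵥ x) * β * β' + u ⬝ᵥ v')
        ((α + (x ⬝ᵥ x) * β) • u' + u ᵥ* D') ((α' + (x ⬝ᵥ x) * β') • v + D *ᵥ v')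
        ((x ⬝ᵥ x) • vecMulVec v u' + D * D') := by
  simp only [rankOneBlock, fromBlocks_multiply, Matrix.mul_add, Matrix.mul_smul, mul_vecMulVec,
    vecMulVec_mul, Matrix.mul_one, vecMulVec_mulVec, op_smul_eq_smul, add_mulVec, smul_mulVec,
    one_mulVec, smul_vecMulVec, add_vecMulVec, vecMulVec_add, vecMulVec_smul]
  congr 1 <;> module

omit [Fintype m] [Fintype o] in
theorem rankOneBlock_smul (c : R) (x : m → R) (α β : R) (u v : o → R) (D : Matrix o o R) :
    rankOneBlock (c • x) α β u v D = rankOneBlock x α (c * c * β) (c • u) (c • v) D := by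
  simp [rankOneBlock, smul_smul, mul_comm]

end Matrix

section

variable {n : ℕ}

def splitLastTwo (n : ℕ) :
    Matrix (Fin (n + 2)) (Fin (n + 2)) ℝ ≃ₐ[ℝ] Matrix (Fin n ⊕ Fin 2) (Fin n ⊕ Fin 2) ℝ :=
  reindexAlgEquiv ℝ ℝ finSumFinEquiv.symm

theorem splitLastTwo_apply (M : Matrix (Fin (n + 2)) (Fin (n + 2)) ℝ) :
    splitLastTwo n M = M.submatrix finSumFinEquiv finSumFinEquiv :=
  rfl

theorem sum_sq_eq_dotProduct_self (x : Fin n → ℝ) : ∑ i, x i ^ 2 = x ⬝ᵥ x := by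
  simp [dotProduct, sq]

theorem splitLastTwo_nbarMat (x : Fin n → ℝ) :
    splitLastTwo n (nbarMat n x) =
      rankOneBlock x 1 0 ![1, 1] ![-1, 1]
        !![1 - x ⬝ᵥ x / 2, -(x ⬝ᵥ x) / 2; x ⬝ᵥ x / 2, 1 + x ⬝ᵥ x / 2] := by
  rw [splitLastTwo_apply, rankOneBlock]
  ext (i | i) (j | j) <;>
    simp only [fromBlocks_apply₁₁, fromBlocks_apply₁₂, fromBlocks_apply₂₁, fromBlocks_apply₂₂]
  · simp [nbarMat, one_apply, Fin.ext_iff]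
  · fin_cases j <;> simp [nbarMat, vecMulVec_apply]
  · fin_cases i <;> simp [nbarMat, vecMulVec_apply]
  · fin_cases i <;> fin_cases j <;> simp [nbarMat, sum_sq_eq_dotProduct_self, neg_div]

theorem splitLastTwo_nMat (x : Fin n → ℝ) :
    splitLastTwo n (nMat n x) =
      rankOneBlock x 1 0 ![1, -1] ![-1, -1]
        !![1 - x ⬝ᵥ x / 2, x ⬝ᵥ x / 2; -(x ⬝ᵥ x) / 2, 1 + x ⬝ᵥ x / 2] := by
  rw [splitLastTwo_apply, rankOneBlock]
  ext (i | i) (j | j) <;>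
    simp only [fromBlocks_apply₁₁, fromBlocks_apply₁₂, fromBlocks_apply₂₁, fromBlocks_apply₂₂]
  · simp [nMat, one_apply, Fin.ext_iff]
  · fin_cases j <;> simp [nMat, vecMulVec_apply]
  · fin_cases i <;> simp [nMat, vecMulVec_apply]
  · fin_cases i <;> fin_cases j <;> simp [nMat, sum_sq_eq_dotProduct_self, neg_div]

theorem splitLastTwo_w0Mat (x : Fin n → ℝ) :
    splitLastTwo n (w0Mat n) = rankOneBlock x (-1) 0 0 0 !![-1, 0; 0, 1] := by
  rw [splitLastTwo_apply, rankOneBlock]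
  ext (i | i) (j | j) <;>
    simp only [fromBlocks_apply₁₁, fromBlocks_apply₁₂, fromBlocks_apply₂₁, fromBlocks_apply₂₂]
  · have : (i : ℕ) ≠ n + 1 := by omega
    simp [w0Mat, one_apply, Fin.ext_iff, this]
    split_ifs <;> norm_num
  · fin_cases j <;> simp [w0Mat, Fin.ext_iff, vecMulVec_apply] <;> omega
  · fin_cases i <;> simp [w0Mat, Fin.ext_iff, vecMulVec_apply] <;> omega
  · fin_cases i <;> fin_cases j <;> simp [w0Mat, Fin.ext_iff]

theorem splitLastTwo_mTildeMat (x : Fin n → ℝ) :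
    splitLastTwo n (mTildeMat n x) = rankOneBlock x (-1) (2 / x ⬝ᵥ x) 0 0 1 := by
  rw [splitLastTwo_apply, rankOneBlock]
  ext (i | i) (j | j) <;>
    simp only [fromBlocks_apply₁₁, fromBlocks_apply₁₂, fromBlocks_apply₂₁, fromBlocks_apply₂₂]
  · simp [mTildeMat, one_apply, Fin.ext_iff, vecMulVec_apply, sum_sq_eq_dotProduct_self]
    ring
  · fin_cases j <;> simp [mTildeMat, vecMulVec_apply]
  · fin_cases i <;> simp [mTildeMat, vecMulVec_apply]
  · fin_cases i <;> fin_cases j <;> simp [mTildeMat]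

theorem splitLastTwo_H0Mat :
    splitLastTwo n (H0Mat n) = fromBlocks 0 0 0 !![0, 1; 1, 0] := by
  rw [splitLastTwo_apply]
  ext (i | i) (j | j) <;>
    simp only [fromBlocks_apply₁₁, fromBlocks_apply₁₂, fromBlocks_apply₂₁, fromBlocks_apply₂₂]
  · have : n ≠ i := by omega
    have : n + 1 ≠ i := by omega
    simp [H0Mat, Fin.ext_iff, *]
  · fin_cases j <;> simp [H0Mat, single_apply, Fin.ext_iff] <;> omega
  · fin_cases i <;> simp [H0Mat, single_apply, Fin.ext_iff] <;> omega
  · fin_cases i <;> fin_cases j <;> simp [H0Mat, single_apply, Fin.ext_iff]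

theorem H0Mat_pow_three : H0Mat n ^ 3 = H0Mat n := by
  apply (splitLastTwo n).injective
  rw [map_pow, splitLastTwo_H0Mat, pow_succ, sq, fromBlocks_multiply, fromBlocks_multiply]
  simp

theorem splitLastTwo_exp_H0Mat (x : Fin n → ℝ) (t : ℝ) :
    splitLastTwo n (NormedSpace.exp (t • H0Mat n)) =
      rankOneBlock x 1 0 0 0 !![Real.cosh t, Real.sinh t; Real.sinh t, Real.cosh t] := by
  rw [NormedSpace.exp_smul_of_pow_three_eq_self H0Mat_pow_three, map_add, map_add, map_smul,
    map_smul, map_pow, map_one, splitLastTwo_H0Mat, rankOneBlock, ← fromBlocks_one, sq,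
    fromBlocks_multiply, fromBlocks_smul, fromBlocks_smul, fromBlocks_add, fromBlocks_add]
  congr 1
  · simp
  · ext i j; simp [vecMulVec_apply]
  · ext i j; simp [vecMulVec_apply]
  · ext i j; fin_cases i <;> fin_cases j <;> simp [one_apply]

theorem splitLastTwo_w0Mat_mul_nbarMat (x : Fin n → ℝ) :
    splitLastTwo n (w0Mat n * nbarMat n x) =
      rankOneBlock x (-1) 0 ![-1, -1] ![1, 1]
        !![x ⬝ᵥ x / 2 - 1, x ⬝ᵥ x / 2; x ⬝ᵥ x / 2, 1 + x ⬝ᵥ x / 2] := by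
  rw [map_mul, splitLastTwo_w0Mat x, splitLastTwo_nbarMat, rankOneBlock_mul]
  congr 1
  · ring
  · simp
  · ext i; fin_cases i <;> simp
  · ext i; fin_cases i <;> simp
  · ext i j; fin_cases i <;> fin_cases j <;> simp [neg_div]

theorem splitLastTwo_nbarMat_mul_mTildeMat_mul_exp_mul_nMat (x : Fin n → ℝ)
    (hx : 0 < x ⬝ᵥ x) :
    splitLastTwo n (nbarMat n ((-(x ⬝ᵥ x)⁻¹) • x) * mTildeMat n x *
        NormedSpace.exp (Real.log (x ⬝ᵥ x) • H0Mat n) * nMat n ((-(x ⬝ᵥ x)⁻¹) • x)) =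
      rankOneBlock x (-1) 0 ![-1, -1] ![1, 1]
        !![x ⬝ᵥ x / 2 - 1, x ⬝ᵥ x / 2; x ⬝ᵥ x / 2, 1 + x ⬝ᵥ x / 2] := by
  set S := x ⬝ᵥ x with hS
  have hS0 : S ≠ 0 := hx.ne'
  have hyy : ((-S⁻¹) • x) ⬝ᵥ ((-S⁻¹) • x) = S⁻¹ := by
    rw [smul_dotProduct, dotProduct_smul, ← hS, smul_eq_mul, smul_eq_mul]
    field_simp
  rw [map_mul, map_mul, map_mul, splitLastTwo_nbarMat, hyy, splitLastTwo_mTildeMat,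
    splitLastTwo_exp_H0Mat x, splitLastTwo_nMat, hyy]
  simp only [rankOneBlock_smul, rankOneBlock_mul]
  rw [← hS, Real.cosh_log hx, Real.sinh_log hx]
  congr 1
  · ring
  · simp [dotProduct, Fin.sum_univ_two]
    field_simp
    ring
  · ext i; fin_cases i <;> simp <;> field_simp <;> ring
  · ext i; fin_cases i <;> simp <;> field_simp <;> ring
  · ext i j; fin_cases i <;> fin_cases j <;> simp <;> field_simp <;> ring

end

/-- Bruhat decomposition: `w₀ · n̄_x = n̄_y · m̃ · exp(t H₀) · n_y` with
`y = −x/‖x‖²` and `t = 2 log ‖x‖`. -/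
theorem w0_mul_nbar_eq (n : ℕ) (x : Fin n → ℝ) (hx : x ≠ 0) :
    w0Mat n * nbarMat n x =
      nbarMat n (fun i => -x i / (∑ i, x i ^ 2)) * mTildeMat n x *
        NormedSpace.exp ((2 * Real.log (Real.sqrt (∑ i, x i ^ 2))) • H0Mat n) *
        nMat n (fun i => -x i / (∑ i, x i ^ 2)) := by
  rw [sum_sq_eq_dotProduct_self]
  have hS : 0 < x ⬝ᵥ x :=
    (Finset.sum_nonneg fun i _ => mul_self_nonneg (x i)).lt_of_ne'
      (dotProduct_self_eq_zero.not.mpr hx)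
  have hy : (fun i => -x i / x ⬝ᵥ x) = (-(x ⬝ᵥ x)⁻¹) • x := by
    ext i
    simp [div_eq_inv_mul]
  have ht : 2 * Real.log (Real.sqrt (x ⬝ᵥ x)) = Real.log (x ⬝ᵥ x) := by
    rw [Real.log_sqrt hS.le]
    ring
  rw [hy, ht]
  apply (splitLastTwo n).injective
  rw [splitLastTwo_w0Mat_mul_nbarMat, splitLastTwo_nbarMat_mul_mTildeMat_mul_exp_mul_nMat x hS]
end

section
/- For x ∈ ℝⁿ and the map x ↦ n̄_x given by the block matrix [[Iₙ, x, x], [−xᵀ, 1−‖x‖²/2, −‖x‖²/2], [xᵀ, ‖x‖²/2, 1+‖x‖²/2]], one has n̄_x · n̄_y = n̄_{x+y} for all x, y ∈ ℝⁿ; i.e. x ↦ n̄_x is a group homomorphism from (ℝⁿ, +) to GL(n+2, ℝ). -/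
open Matrix

lemma fin_cases3' {n : ℕ} (a : Fin (n+2)) :
    (∃ a' : Fin n, a = Fin.castSucc (Fin.castSucc a')) ∨
      a = Fin.castSucc (Fin.last n) ∨ a = Fin.last (n+1) := by
  rcases lt_or_ge (a : ℕ) n with h | h
  · exact Or.inl ⟨⟨a, h⟩, Fin.ext rfl⟩
  · rcases eq_or_lt_of_le h with h' | h'
    · exact Or.inr (Or.inl (Fin.ext (by simp [h'.symm])))
    · refine Or.inr (Or.inr (Fin.ext ?_))
      have := a.2
      simp only [Fin.val_last]
      omega

/-- `x ↦ n̄_x` is a group homomorphism from `(ℝⁿ, +)` to `GL(n+2, ℝ)`: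
`n̄_x · n̄_y = n̄_{x+y}`. -/
theorem nbarMat_mul (n : ℕ) (x y : Fin n → ℝ) :
    nbarMat n x * nbarMat n y = nbarMat n (x + y) := by
  have hsq : ∀ v w : Fin n → ℝ, ∑ i, (v i + w i) ^ 2
      = ∑ i, v i ^ 2 + 2 * ∑ i, v i * w i + ∑ i, w i ^ 2 := by
    intro v w
    rw [Finset.mul_sum, ← Finset.sum_add_distrib, ← Finset.sum_add_distrib]
    congr 1; ext i; ring
  ext a b
  rw [Matrix.mul_apply, Fin.sum_univ_castSucc, Fin.sum_univ_castSucc]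
  rcases fin_cases3' a with ⟨a', rfl⟩ | rfl | rfl <;>
    rcases fin_cases3' b with ⟨b', rfl⟩ | rfl | rfl <;>
      simp [nbarMat, Fin.castSucc_inj, mul_ite, ite_mul, Finset.sum_ite_eq,
        Finset.sum_ite_eq', hsq, Finset.sum_add_distrib, neg_mul, mul_neg,
        Finset.sum_neg_distrib] <;> ring
end

section
/- On smooth functions f: ℝⁿ → ℂ, the following differential operator identity holds: Σ_{a,d=1}^n ξ_d (ξ_a ∂_j − ξ_j ∂_a)(ξ_a ∂_d − ξ_d ∂_a) f = ξ_j ‖ξ‖² Δf − ξ_j E²f − (n−2) ξ_j Ef, where E = Σ_k ξ_k ∂_k is the Euler operator and Δ = Σ_k ∂_k² is the Laplacian. -/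
/-- The partial derivative `∂_j` on functions `ℝⁿ → ℂ`. -/
noncomputable def pd {n : ℕ} (j : Fin n) (f : (Fin n → ℝ) → ℂ) : (Fin n → ℝ) → ℂ :=
  fun ξ => fderiv ℝ f ξ (Pi.single j 1)

/-- The Euler operator `E = Σ_k ξ_k ∂_k`. -/
noncomputable def eulerOp {n : ℕ} (f : (Fin n → ℝ) → ℂ) : (Fin n → ℝ) → ℂ :=
  fun ξ => ∑ k, (ξ k : ℂ) * pd k f ξ

/-- The Laplacian `Δ = Σ_k ∂_k²`. -/
noncomputable def lapOp {n : ℕ} (f : (Fin n → ℝ) → ℂ) : (Fin n → ℝ) → ℂ :=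
  fun ξ => ∑ k, pd k (pd k f) ξ

/-- The rotation vector field `ξ_a ∂_b − ξ_b ∂_a`. -/
noncomputable def rotOp {n : ℕ} (a b : Fin n) (f : (Fin n → ℝ) → ℂ) : (Fin n → ℝ) → ℂ :=
  fun ξ => (ξ a : ℂ) * pd b f ξ - (ξ b : ℂ) * pd a f ξ

noncomputable def coordCLM {n : ℕ} (a : Fin n) : (Fin n → ℝ) →L[ℝ] ℂ :=
  Complex.ofRealCLM.comp (ContinuousLinearMap.proj a)

lemma contDiff_pd {n : ℕ} (k : Fin n) {f : (Fin n → ℝ) → ℂ} (hf : ContDiff ℝ (⊤ : ℕ∞) f) :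
    ContDiff ℝ (⊤ : ℕ∞) (pd k f) := by
  have h1 : ContDiff ℝ (⊤ : ℕ∞) (fderiv ℝ f) := hf.fderiv_right (by simp)
  exact (ContinuousLinearMap.apply ℝ ℂ (Pi.single k 1 : Fin n → ℝ)).contDiff.comp h1

lemma contDiff_coord_mul {n : ℕ} (a : Fin n) {g : (Fin n → ℝ) → ℂ} (hg : ContDiff ℝ (⊤ : ℕ∞) g) :
    ContDiff ℝ (⊤ : ℕ∞) (fun x => (x a : ℂ) * g x) :=
  ((coordCLM a).contDiff : ContDiff ℝ (⊤ : ℕ∞) fun x : Fin n → ℝ => ((x a : ℝ) : ℂ)).mul hg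

lemma pd_coord_mul {n : ℕ} (k a : Fin n) {g : (Fin n → ℝ) → ℂ}
    (hg : ContDiff ℝ (⊤ : ℕ∞) g) (ξ : Fin n → ℝ) :
    pd k (fun x => (x a : ℂ) * g x) ξ
      = (if k = a then g ξ else 0) + (ξ a : ℂ) * pd k g ξ := by
  have hc : DifferentiableAt ℝ (fun x : Fin n → ℝ => ((x a : ℝ) : ℂ)) ξ :=
    (coordCLM a).differentiableAt
  have hgd : DifferentiableAt ℝ g ξ := (hg.differentiable (by simp)).differentiableAt
  have h := fderiv_fun_mul (𝕜 := ℝ) hc hgd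
  unfold pd
  rw [h]
  simp only [ContinuousLinearMap.add_apply, ContinuousLinearMap.smul_apply]
  have hfc : fderiv ℝ (fun x : Fin n → ℝ => ((x a : ℝ) : ℂ)) ξ = coordCLM a :=
    (coordCLM a).fderiv
  rw [hfc]
  show _ • _ + _ • ((Pi.single k 1 : Fin n → ℝ) a : ℂ) = _
  have : ((Pi.single k 1 : Fin n → ℝ) a : ℂ) = if k = a then 1 else 0 := by
    rw [Pi.single_apply]
    rcases eq_or_ne a k with h1 | h1
    · simp [h1]
    · simp [h1, Ne.symm h1]
  rw [this]
  split_ifs <;> simp [smul_eq_mul] <;> ring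

lemma pd_sub {n : ℕ} (k : Fin n) {g h : (Fin n → ℝ) → ℂ} {ξ : Fin n → ℝ}
    (hg : DifferentiableAt ℝ g ξ) (hh : DifferentiableAt ℝ h ξ) :
    pd k (fun x => g x - h x) ξ = pd k g ξ - pd k h ξ := by
  unfold pd
  rw [fderiv_fun_sub hg hh]
  rfl

lemma pd_sum {n : ℕ} (k : Fin n) (g : Fin n → (Fin n → ℝ) → ℂ) {ξ : Fin n → ℝ}
    (hg : ∀ i, DifferentiableAt ℝ (g i) ξ) :
    pd k (fun x => ∑ i, g i x) ξ = ∑ i, pd k (g i) ξ := by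
  unfold pd
  rw [fderiv_fun_sum fun i _ => hg i]
  simp [ContinuousLinearMap.sum_apply]

lemma pd_rot {n : ℕ} (k a d : Fin n) {f : (Fin n → ℝ) → ℂ} (hf : ContDiff ℝ (⊤ : ℕ∞) f)
    (ξ : Fin n → ℝ) :
    pd k (rotOp a d f) ξ
      = ((if k = a then pd d f ξ else 0) + (ξ a : ℂ) * pd k (pd d f) ξ)
        - ((if k = d then pd a f ξ else 0) + (ξ d : ℂ) * pd k (pd a f) ξ) := by
  have h1 : DifferentiableAt ℝ (fun x => (x a : ℂ) * pd d f x) ξ :=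
    ((contDiff_coord_mul a (contDiff_pd d hf)).differentiable (by simp)).differentiableAt
  have h2 : DifferentiableAt ℝ (fun x => (x d : ℂ) * pd a f x) ξ :=
    ((contDiff_coord_mul d (contDiff_pd a hf)).differentiable (by simp)).differentiableAt
  have : rotOp a d f = fun x => (x a : ℂ) * pd d f x - (x d : ℂ) * pd a f x := rfl
  rw [this, pd_sub k h1 h2, pd_coord_mul k a (contDiff_pd d hf) ξ,
    pd_coord_mul k d (contDiff_pd a hf) ξ]

lemma pd_euler {n : ℕ} (a : Fin n) {f : (Fin n → ℝ) → ℂ} (hf : ContDiff ℝ (⊤ : ℕ∞) f)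
    (ξ : Fin n → ℝ) :
    pd a (eulerOp f) ξ = pd a f ξ + ∑ d, (ξ d : ℂ) * pd a (pd d f) ξ := by
  have : eulerOp f = fun x => ∑ i, (x i : ℂ) * pd i f x := rfl
  rw [this, pd_sum a _ fun i =>
    ((contDiff_coord_mul i (contDiff_pd i hf)).differentiable (by simp)).differentiableAt]
  rw [Finset.sum_congr rfl fun i _ => pd_coord_mul a i (contDiff_pd i hf) ξ]
  rw [Finset.sum_add_distrib, Finset.sum_ite_eq]
  simp

lemma alg (n : ℕ) (j : Fin n) (x P : Fin n → ℂ) (D : Fin n → Fin n → ℂ) :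
    ∑ a, ∑ d, x d * (x a * ((if j = a then P d else 0) + x a * D j d
            - ((if j = d then P a else 0) + x d * D j a))
          - x j * ((P d + x a * D a d) - ((if a = d then P a else 0) + x d * D a a)))
      = x j * (∑ k, x k ^ 2) * (∑ k, D k k)
        - x j * (∑ a, x a * (P a + ∑ d, x d * D a d))
        - ((n : ℂ) - 2) * x j * ∑ k, x k * P k := by
  have inner : ∀ a : Fin n,
      ∑ d, x d * (x a * ((if j = a then P d else 0) + x a * D j d
            - ((if j = d then P a else 0) + x d * D j a))
          - x j * ((P d + x a * D a d) - ((if a = d then P a else 0) + x d * D a a)))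
      = (if j = a then x a * ∑ k, x k * P k else 0) + x a ^ 2 * (∑ d, x d * D j d)
          - (∑ k, x k ^ 2) * (x a * D j a) - x j * ∑ k, x k * P k
          - x j * (x a * ∑ d, x d * D a d)
          + x j * (∑ k, x k ^ 2) * D a a := by
    intro a
    have step : ∀ d : Fin n,
        x d * (x a * ((if j = a then P d else 0) + x a * D j d
            - ((if j = d then P a else 0) + x d * D j a))
          - x j * ((P d + x a * D a d) - ((if a = d then P a else 0) + x d * D a a)))
        = (if j = a then x a * (x d * P d) else 0) + x a ^ 2 * (x d * D j d)
            - (if j = d then x d * (x a * P a) else 0) - x d ^ 2 * (x a * D j a)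
            - x j * (x d * P d) - x j * (x a * (x d * D a d))
            + (if a = d then x j * (x d * P a) else 0) + x j * (x d ^ 2 * D a a) := by
      intro d; split_ifs <;> ring
    rw [Finset.sum_congr rfl fun d _ => step d]
    simp only [Finset.sum_add_distrib, Finset.sum_sub_distrib, ← Finset.mul_sum,
      Finset.sum_ite_eq, Finset.mem_univ, if_true]
    have e1 : (∑ i : Fin n, if j = a then x a * (x i * P i) else 0)
        = if j = a then x a * ∑ k, x k * P k else 0 := by
      split_ifs with h
      · rw [Finset.mul_sum]
      · simp
    have e2 : ∑ i : Fin n, x i ^ 2 * (x a * D j a) = (∑ k, x k ^ 2) * (x a * D j a) :=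
      (Finset.sum_mul _ _ _).symm
    have e3 : ∑ i : Fin n, x i ^ 2 * D a a = (∑ k, x k ^ 2) * D a a :=
      (Finset.sum_mul _ _ _).symm
    rw [e1, e2, e3]
    ring
  rw [Finset.sum_congr rfl fun a _ => inner a]
  simp only [Finset.sum_add_distrib, Finset.sum_sub_distrib, Finset.sum_ite_eq,
    Finset.mem_univ, if_true, Finset.sum_const, Finset.card_univ, Fintype.card_fin,
    nsmul_eq_mul]
  have c1 : ∑ a : Fin n, x a ^ 2 * ∑ d, x d * D j d
      = ∑ a : Fin n, (∑ k, x k ^ 2) * (x a * D j a) := by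
    rw [← Finset.sum_mul, Finset.mul_sum]
  have c2 : ∑ a : Fin n, x j * (x a * ∑ d, x d * D a d)
      = x j * ∑ a, x a * ∑ d, x d * D a d := (Finset.mul_sum _ _ _).symm
  have c3 : ∑ a : Fin n, x j * (∑ k, x k ^ 2) * D a a
      = x j * (∑ k, x k ^ 2) * ∑ k, D k k := (Finset.mul_sum _ _ _).symm
  have c4 : (∑ a : Fin n, x a * (P a + ∑ d, x d * D a d))
      = (∑ a, x a * P a) + ∑ a, x a * ∑ d, x d * D a d := by
    rw [← Finset.sum_add_distrib]
    exact Finset.sum_congr rfl fun a _ => by ring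
  rw [c1, c2, c3, c4]
  ring

/-- `Σ_{a,d} ξ_d (ξ_a ∂_j − ξ_j ∂_a)(ξ_a ∂_d − ξ_d ∂_a) f
      = ξ_j ‖ξ‖² Δf − ξ_j E²f − (n−2) ξ_j Ef`. -/
theorem sum_rot_rot_eq (n : ℕ) (j : Fin n) (f : (Fin n → ℝ) → ℂ)
    (hf : ContDiff ℝ (⊤ : ℕ∞) f) (ξ : Fin n → ℝ) :
    ∑ a, ∑ d, (ξ d : ℂ) * rotOp a j (rotOp a d f) ξ
      = (ξ j : ℂ) * (∑ k, (ξ k : ℂ) ^ 2) * lapOp f ξ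
        - (ξ j : ℂ) * eulerOp (eulerOp f) ξ
        - ((n : ℂ) - 2) * (ξ j : ℂ) * eulerOp f ξ := by
  set x : Fin n → ℂ := fun k => (ξ k : ℂ) with hx
  set P : Fin n → ℂ := fun k => pd k f ξ with hP
  set D : Fin n → Fin n → ℂ := fun a b => pd a (pd b f) ξ with hD
  have expand : ∀ a d : Fin n, (ξ d : ℂ) * rotOp a j (rotOp a d f) ξ
      = x d * (x a * ((if j = a then P d else 0) + x a * D j d
            - ((if j = d then P a else 0) + x d * D j a))
          - x j * ((P d + x a * D a d) - ((if a = d then P a else 0) + x d * D a a))) := by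
    intro a d
    have h1 : rotOp a j (rotOp a d f) ξ
        = (ξ a : ℂ) * pd j (rotOp a d f) ξ - (ξ j : ℂ) * pd a (rotOp a d f) ξ := rfl
    rw [h1, pd_rot j a d hf ξ, pd_rot a a d hf ξ, if_pos rfl]
  rw [Finset.sum_congr rfl fun a _ => Finset.sum_congr rfl fun d _ => expand a d,
    alg n j x P D]
  have hlap : lapOp f ξ = ∑ k, D k k := rfl
  have heuler : eulerOp f ξ = ∑ k, x k * P k := rfl
  have heuler2 : eulerOp (eulerOp f) ξ = ∑ a, x a * (P a + ∑ d, x d * D a d) := by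
    have h2 : eulerOp (eulerOp f) ξ = ∑ a, (ξ a : ℂ) * pd a (eulerOp f) ξ := rfl
    rw [h2]
    exact Finset.sum_congr rfl fun a _ => by rw [pd_euler a hf ξ]
  rw [hlap, heuler, heuler2]
end
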